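/- arXiv:2507.12791 — 2 statements merged into one kernel-verified Lean document; each statement's English description precedes it below -/
import Mathlib

section
/- Specializing the weak Rényi triangle inequality to λ = 1/2: for q > 1 and probability measures μ, ν, π, one has R_q(μ ‖ π) ≤ ((q - 1/2)/(q - 1)) R_{2q}(μ ‖ ν) + R_{2q-1}(ν ‖ π). -/
open MeasureTheory
open scoped Classical

/-- The `q`-Rényi divergence `R_q(μ ‖ ν) = (q-1)⁻¹ log ∫ (dμ/dν)^q dν`, with the
convention that it is `+∞` when `μ` is not absolutely continuous w.r.t. `ν`. -/
noncomputable def renyiDiv {Ω : Type*} [MeasurableSpace Ω] (q : ℝ) (μ ν : Measure Ω) : EReal :=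
  if μ ≪ ν then (((q - 1)⁻¹ : ℝ) : EReal) * ENNReal.log (∫⁻ x, μ.rnDeriv ν x ^ q ∂ν)
  else ⊤

/-!
Since `dμ/dπ = (dμ/dν) (dν/dπ)` `π`-a.e., Cauchy–Schwarz applied to the factorisation
`(dμ/dπ)^q = ((dμ/dν)^q (dν/dπ)^{1/2}) · (dν/dπ)^{q - 1/2}` gives
`∫ (dμ/dπ)^q dπ ≤ (∫ (dμ/dν)^{2q} dν)^{1/2} (∫ (dν/dπ)^{2q-1} dπ)^{1/2}`.
Taking logarithms and dividing by `q - 1` gives the claim, because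
`(q - 1/2)/(q - 1) · 1/(2q - 1) = 1/(2(q - 1)) = 1/((2q - 1) - 1)`.
Without absolute continuity the right-hand side is `⊤`, the divergences being nonnegative.
-/

section

variable {Ω : Type*} [MeasurableSpace Ω]

lemma renyiDiv_of_absolutelyContinuous {μ ν : Measure Ω} (h : μ ≪ ν) (q : ℝ) :
    renyiDiv q μ ν = (((q - 1)⁻¹ : ℝ) : EReal) * ENNReal.log (∫⁻ x, μ.rnDeriv ν x ^ q ∂ν) :=
  if_pos h

lemma renyiDiv_of_not_absolutelyContinuous {μ ν : Measure Ω} (h : ¬μ ≪ ν) (q : ℝ) :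
    renyiDiv q μ ν = ⊤ :=
  if_neg h

/-- Hölder's inequality against the constant `1`, using `∫ dμ/dν dν = μ univ = 1`. -/
lemma one_le_lintegral_rnDeriv_rpow {μ ν : Measure Ω} [IsProbabilityMeasure μ]
    [IsProbabilityMeasure ν] (hμν : μ ≪ ν) {p : ℝ} (hp : 1 < p) :
    1 ≤ ∫⁻ x, μ.rnDeriv ν x ^ p ∂ν := by
  have holder := ENNReal.lintegral_mul_le_Lp_mul_Lq ν (Real.HolderConjugate.conjExponent hp)
    (Measure.measurable_rnDeriv μ ν).aemeasurable aemeasurable_const (g := 1)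
  simp only [Pi.mul_apply, Pi.one_apply, mul_one, ENNReal.one_rpow, lintegral_const,
    measure_univ, Measure.lintegral_rnDeriv hμν, one_div] at holder
  simpa using (ENNReal.le_rpow_inv_iff (by positivity)).1 holder

lemma renyiDiv_nonneg (μ ν : Measure Ω) [IsProbabilityMeasure μ] [IsProbabilityMeasure ν]
    {q : ℝ} (hq : 1 < q) : 0 ≤ renyiDiv q μ ν := by
  by_cases hμν : μ ≪ ν
  · rw [renyiDiv_of_absolutelyContinuous hμν]
    refine mul_nonneg (EReal.coe_nonneg.2 (inv_nonneg.2 (sub_nonneg.2 hq.le))) ?_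
    exact ENNReal.zero_le_log_iff.2 (one_le_lintegral_rnDeriv_rpow hμν hq)
  · simp [renyiDiv_of_not_absolutelyContinuous hμν]

lemma lintegral_rnDeriv_rpow_le_sqrt_mul_sqrt {μ ν π : Measure Ω} [SigmaFinite μ]
    [SigmaFinite ν] [SigmaFinite π] (hμν : μ ≪ ν) (hνπ : ν ≪ π) {q : ℝ} (hq : 1 / 2 ≤ q) :
    ∫⁻ x, μ.rnDeriv π x ^ q ∂π ≤
      (∫⁻ x, μ.rnDeriv ν x ^ (2 * q) ∂ν) ^ (1 / 2 : ℝ) *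
        (∫⁻ x, ν.rnDeriv π x ^ (2 * q - 1) ∂π) ^ (1 / 2 : ℝ) := by
  set f := fun x ↦ μ.rnDeriv ν x ^ q * ν.rnDeriv π x ^ (1 / 2 : ℝ)
  set g := fun x ↦ ν.rnDeriv π x ^ (q - 1 / 2)
  have hf : Measurable f := ((Measure.measurable_rnDeriv μ ν).pow_const _).mul
    ((Measure.measurable_rnDeriv ν π).pow_const _)
  have hg : Measurable g := (Measure.measurable_rnDeriv ν π).pow_const _
  have hfactor : ∫⁻ x, μ.rnDeriv π x ^ q ∂π = ∫⁻ x, (f * g) x ∂π := by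
    refine lintegral_congr_ae ?_
    filter_upwards [Measure.rnDeriv_mul_rnDeriv (κ := π) hμν] with x hx
    rw [← hx, Pi.mul_apply, Pi.mul_apply, ENNReal.mul_rpow_of_nonneg _ _ (by linarith), mul_assoc,
      ← ENNReal.rpow_add_of_nonneg _ _ (by norm_num) (by linarith)]
    norm_num
  have hf_sq : ∫⁻ x, f x ^ (2 : ℝ) ∂π = ∫⁻ x, μ.rnDeriv ν x ^ (2 * q) ∂ν := by
    rw [← lintegral_rnDeriv_mul hνπ ((Measure.measurable_rnDeriv μ ν).pow_const _).aemeasurable]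
    congr 1 with x
    rw [ENNReal.mul_rpow_of_nonneg _ _ zero_le_two, ← ENNReal.rpow_mul, ← ENNReal.rpow_mul]
    norm_num [mul_comm]
  have hg_sq : ∫⁻ x, g x ^ (2 : ℝ) ∂π = ∫⁻ x, ν.rnDeriv π x ^ (2 * q - 1) ∂π := by
    congr 1 with x
    rw [← ENNReal.rpow_mul]
    ring_nf
  have cauchy_schwarz := ENNReal.lintegral_mul_le_Lp_mul_Lq π Real.HolderConjugate.two_two
    hf.aemeasurable hg.aemeasurable
  rwa [← hfactor, hf_sq, hg_sq] at cauchy_schwarz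

end

/-- Weak triangle inequality for Rényi divergences specialized to `λ = 1/2`:
`R_q(μ ‖ π) ≤ ((q - 1/2)/(q - 1)) R_{2q}(μ ‖ ν) + R_{2q-1}(ν ‖ π)`. -/
theorem renyi_weak_triangle_half {Ω : Type*} [MeasurableSpace Ω]
    (μ ν π : Measure Ω)
    [IsProbabilityMeasure μ] [IsProbabilityMeasure ν] [IsProbabilityMeasure π]
    (q : ℝ) (hq : 1 < q) :
    renyiDiv q μ π ≤
      (((q - 1 / 2) / (q - 1) : ℝ) : EReal) * renyiDiv (2 * q) μ ν
        + renyiDiv (2 * q - 1) ν π := by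
  have hcoef : (0 : EReal) < ((q - 1 / 2) / (q - 1) : ℝ) :=
    EReal.coe_pos.2 (div_pos (by linarith) (by linarith))
  have hinv : (0 : EReal) ≤ ((q - 1)⁻¹ : ℝ) := EReal.coe_nonneg.2 (inv_nonneg.2 (by linarith))
  have hR₁ := renyiDiv_nonneg μ ν (q := 2 * q) (by linarith)
  have hR₂ := renyiDiv_nonneg ν π (q := 2 * q - 1) (by linarith)
  by_cases hνπ : ν ≪ π
  swap
  · rw [renyiDiv_of_not_absolutelyContinuous hνπ,
      EReal.add_top_of_ne_bot (EReal.bot_lt_zero.trans_le (mul_nonneg hcoef.le hR₁)).ne']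
    exact le_top
  by_cases hμν : μ ≪ ν
  swap
  · rw [renyiDiv_of_not_absolutelyContinuous hμν, EReal.mul_top_of_pos hcoef,
      EReal.top_add_of_ne_bot (EReal.bot_lt_zero.trans_le hR₂).ne']
    exact le_top
  have hlog := ENNReal.log_le_log
    (lintegral_rnDeriv_rpow_le_sqrt_mul_sqrt hμν hνπ (q := q) (by linarith))
  rw [ENNReal.log_mul_add, ENNReal.log_rpow, ENNReal.log_rpow] at hlog
  rw [renyiDiv_of_absolutelyContinuous (hμν.trans hνπ), renyiDiv_of_absolutelyContinuous hμν,
    renyiDiv_of_absolutelyContinuous hνπ]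
  calc _ ≤ (((q - 1)⁻¹ : ℝ) : EReal) * (((1 / 2 : ℝ) : EReal) * _ + ((1 / 2 : ℝ) : EReal) * _) :=
        mul_le_mul_of_nonneg_left hlog hinv
    _ = _ := by
        rw [EReal.left_distrib_of_nonneg_of_ne_top hinv (EReal.coe_ne_top _)]
        simp only [← mul_assoc, ← EReal.coe_mul]
        congr 3 <;> grind
end

section
/- (Sub-Weibull change of measure along a divergence-nonincreasing flow.) Let π, μ₀ be probability measures with R_q(μ₀ ‖ π) ≤ K·d^{1/2} for some q ≥ 2 and K > 0, and let μ be any probability measure with R_q(μ ‖ π) ≤ R_q(μ₀ ‖ π). Suppose f is a measurable function such that for all δ ∈ (0, 1/c₀), π{f > C₁ d + C₂ d^{1/2} log(1/δ) + C₃ log²(1/δ)} ≤ δ. Then there is a constant C' (depending only on K, c₀) such that for all δ ∈ (0, 1/c₀'), μ{f > C' max{C₁, C₂, C₃} d + C' C₂ d^{1/2} log(1/δ) + C' C₃ log²(1/δ)} ≤ δ. -/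
open MeasureTheory
open scoped Classical

/-!
Hölder's inequality with exponents `q` and `q/(q-1)` gives, for every measurable `A`,
`μ A ≤ (∫ (dμ/dπ)^q dπ)^{1/q} π(A)^{(q-1)/q} ≤ exp((q-1)/q · K√d) π(A)^{(q-1)/q}`.
Applying the `π`-tail bound at `δ' = exp(-(q/(q-1)) log(1/δ) - K√d)` therefore bounds the
`μ`-probability by `δ`. Since `q ≥ 2`, `log(1/δ') ≤ 2 log(1/δ) + K√d`, and the threshold at `δ'`
is dominated by the claimed one because `(2L + K√d)² ≤ 8L² + 2K²d` for `L = log(1/δ)`.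
-/

open scoped ENNReal

theorem Real.conjExponent_le_two {q : ℝ} (hq : 2 ≤ q) : q.conjExponent ≤ 2 := by
  rw [Real.conjExponent, div_le_iff₀ (by linarith)]
  linarith

section ChangeOfMeasure

open Real

variable {Ω : Type*} [MeasurableSpace Ω] {μ ν : Measure Ω} {q R : ℝ}

theorem absolutelyContinuous_of_renyiDiv_ne_top (h : renyiDiv q μ ν ≠ ⊤) : μ ≪ ν := by
  by_contra hμν
  exact h (if_neg hμν)

theorem lintegral_rnDeriv_rpow_le_of_renyiDiv_le (hq : 1 < q) (h : renyiDiv q μ ν ≤ R) :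
    ∫⁻ x, μ.rnDeriv ν x ^ q ∂ν ≤ ENNReal.ofReal (exp ((q - 1) * R)) := by
  have hμν := absolutelyContinuous_of_renyiDiv_ne_top (ne_top_of_le_ne_top (EReal.coe_ne_top R) h)
  rw [renyiDiv, if_pos hμν] at h
  have hq₁ : (0 : EReal) < ((q - 1)⁻¹ : ℝ) := by exact_mod_cast inv_pos.mpr (sub_pos.mpr hq)
  have hR : (q - 1) * R = R / (q - 1)⁻¹ := by rw [div_inv_eq_mul, mul_comm]
  rw [← ENNReal.log_le_log_iff, ENNReal.log_ofReal_of_pos (exp_pos _), Real.log_exp, hR,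
    EReal.coe_div, EReal.le_div_iff_mul_le hq₁ (EReal.coe_ne_top _), mul_comm]
  exact h

theorem measure_le_lintegral_rnDeriv_rpow_mul [μ.HaveLebesgueDecomposition ν] [SFinite ν]
    (hμν : μ ≪ ν) (hq : 1 < q) {s : Set Ω} (hs : MeasurableSet s) :
    μ s ≤ (∫⁻ x, μ.rnDeriv ν x ^ q ∂ν) ^ (1 / q) * ν s ^ ((q - 1) / q) := by
  have hpq := Real.HolderConjugate.conjExponent hq
  have hq' : 0 < q.conjExponent := hpq.symm.pos
  have hind : (fun x ↦ s.indicator (1 : Ω → ℝ≥0∞) x ^ q.conjExponent) = s.indicator 1 := by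
    ext x
    by_cases hx : x ∈ s <;> simp [hx, hq']
  calc μ s = ∫⁻ x, (μ.rnDeriv ν * s.indicator (1 : Ω → ℝ≥0∞)) x ∂ν := by
        rw [← Measure.setLIntegral_rnDeriv hμν s, ← lintegral_indicator hs]
        congr 1 with x
        by_cases hx : x ∈ s <;> simp [hx]
    _ ≤ (∫⁻ x, μ.rnDeriv ν x ^ q ∂ν) ^ (1 / q)
          * (∫⁻ x, s.indicator (1 : Ω → ℝ≥0∞) x ^ q.conjExponent ∂ν) ^ (1 / q.conjExponent) :=
        ENNReal.lintegral_mul_le_Lp_mul_Lq ν hpq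
          (Measure.measurable_rnDeriv μ ν).aemeasurable
          ((measurable_one.indicator hs).aemeasurable)
    _ = (∫⁻ x, μ.rnDeriv ν x ^ q ∂ν) ^ (1 / q) * ν s ^ ((q - 1) / q) := by
        rw [hind, lintegral_indicator_one hs, Real.conjExponent, one_div_div]

theorem measure_le_exp_mul_rpow_of_renyiDiv_le [μ.HaveLebesgueDecomposition ν] [SFinite ν]
    (hq : 1 < q) (h : renyiDiv q μ ν ≤ R) {s : Set Ω} (hs : MeasurableSet s) :
    μ s ≤ ENNReal.ofReal (exp ((q - 1) / q * R)) * ν s ^ ((q - 1) / q) := by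
  have hμν := absolutelyContinuous_of_renyiDiv_ne_top (ne_top_of_le_ne_top (EReal.coe_ne_top R) h)
  refine (measure_le_lintegral_rnDeriv_rpow_mul hμν hq hs).trans ?_
  gcongr
  calc (∫⁻ x, μ.rnDeriv ν x ^ q ∂ν) ^ (1 / q)
      ≤ ENNReal.ofReal (exp ((q - 1) * R)) ^ (1 / q) :=
        ENNReal.rpow_le_rpow (lintegral_rnDeriv_rpow_le_of_renyiDiv_le hq h) (by positivity)
    _ = ENNReal.ofReal (exp ((q - 1) / q * R)) := by
        rw [ENNReal.ofReal_rpow_of_pos (exp_pos _), ← Real.exp_mul]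
        ring_nf

theorem measure_le_exp_neg_of_renyiDiv_le [μ.HaveLebesgueDecomposition ν] [SFinite ν]
    (hq : 1 < q) (h : renyiDiv q μ ν ≤ R) {s : Set Ω} (hs : MeasurableSet s) {L : ℝ}
    (hνs : ν s ≤ ENNReal.ofReal (exp (-(q.conjExponent * L + R)))) :
    μ s ≤ ENNReal.ofReal (exp (-L)) := by
  have hq₀ : 0 < q := by linarith
  have hq₁ : q - 1 ≠ 0 := by linarith
  calc μ s ≤ ENNReal.ofReal (exp ((q - 1) / q * R)) * ν s ^ ((q - 1) / q) :=
        measure_le_exp_mul_rpow_of_renyiDiv_le hq h hs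
    _ ≤ ENNReal.ofReal (exp ((q - 1) / q * R))
          * ENNReal.ofReal (exp (-(q.conjExponent * L + R))) ^ ((q - 1) / q) := by
        gcongr
    _ = ENNReal.ofReal (exp (-L)) := by
        rw [ENNReal.ofReal_rpow_of_pos (exp_pos _), ← ENNReal.ofReal_mul (exp_pos _).le,
          ← Real.exp_mul, ← Real.exp_add, Real.conjExponent]
        congr 2
        field_simp
        ring

end ChangeOfMeasure

/-- The threshold of a sub-Weibull tail bound at confidence `δ = e^{-L}`. -/
noncomputable def subWeibullLevel (a b c d L : ℝ) : ℝ := a * d + b * √d * L + c * L ^ 2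

section SubWeibullLevel

open Real

variable {a b c d L : ℝ}

theorem subWeibullLevel_mono (hb : 0 ≤ b) (hc : 0 ≤ c) (hL : 0 ≤ L) {L' : ℝ} (hLL' : L ≤ L') :
    subWeibullLevel a b c d L ≤ subWeibullLevel a b c d L' := by
  unfold subWeibullLevel
  gcongr

theorem subWeibullLevel_two_mul_add_le (ha : 0 ≤ a) (hb : 0 ≤ b) (hc : 0 ≤ c) (hd : 0 ≤ d)
    (hL : 0 ≤ L) {K : ℝ} (hK : 0 ≤ K) :
    subWeibullLevel a b c d (2 * L + K * √d) ≤
      subWeibullLevel ((8 + K + 2 * K ^ 2) * max a (max b c)) ((8 + K + 2 * K ^ 2) * b)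
        ((8 + K + 2 * K ^ 2) * c) d L := by
  set M := max a (max b c)
  have haM : a ≤ M := le_max_left _ _
  have hbM : b ≤ M := (le_max_left _ _).trans (le_max_right _ _)
  have hcM : c ≤ M := (le_max_right _ _).trans (le_max_right _ _)
  have hsqrt : √d * √d = d := mul_self_sqrt hd
  have hsq : (2 * L + K * √d) ^ 2 ≤ 8 * L ^ 2 + 2 * K ^ 2 * d := by
    nlinarith [sq_nonneg (2 * L - K * √d)]
  unfold subWeibullLevel
  calc a * d + b * √d * (2 * L + K * √d) + c * (2 * L + K * √d) ^ 2
      ≤ a * d + b * √d * (2 * L + K * √d) + c * (8 * L ^ 2 + 2 * K ^ 2 * d) := by gcongr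
    _ = a * d + K * (b * d) + 2 * K ^ 2 * (c * d) + 2 * b * √d * L + 8 * c * L ^ 2 := by
        linear_combination b * K * hsqrt
    _ ≤ M * d + K * (M * d) + 2 * K ^ 2 * (M * d) + 2 * b * √d * L + 8 * c * L ^ 2 := by
        gcongr
    _ ≤ (8 + K + 2 * K ^ 2) * M * d + (8 + K + 2 * K ^ 2) * b * √d * L
          + (8 + K + 2 * K ^ 2) * c * L ^ 2 := by
        have hMd : 0 ≤ M * d := mul_nonneg (ha.trans haM) hd
        have hbL : 0 ≤ b * √d * L := by positivity
        have hcL : 0 ≤ c * L ^ 2 := by positivity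
        nlinarith [mul_nonneg hK hbL, mul_nonneg (sq_nonneg K) hbL, mul_nonneg hK hcL,
          mul_nonneg (sq_nonneg K) hcL]

end SubWeibullLevel

/-- Sub-Weibull change of measure along a divergence-nonincreasing flow: if
`R_q(μ₀ ‖ π) ≤ K √d`, `R_q(μ ‖ π) ≤ R_q(μ₀ ‖ π)`, and under `π` the function `f`
satisfies a sub-Weibull tail bound, then `f` satisfies a comparable tail bound under `μ`
with constants depending only on `K` and `c₀`. -/
theorem subweibull_change_of_measure :
    ∀ K c₀ : ℝ, 0 < K → 0 < c₀ →
      ∃ C' : ℝ, 0 < C' ∧ ∃ c₀' : ℝ, 0 < c₀' ∧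
        ∀ (Ω : Type) [MeasurableSpace Ω] (π μ₀ μ : Measure Ω),
          IsProbabilityMeasure π → IsProbabilityMeasure μ₀ → IsProbabilityMeasure μ →
        ∀ q : ℝ, 2 ≤ q →
        ∀ d C₁ C₂ C₃ : ℝ, 1 ≤ d → 0 ≤ C₁ → 0 ≤ C₂ → 0 ≤ C₃ →
        ∀ f : Ω → ℝ, Measurable f →
          renyiDiv q μ₀ π ≤ ((K * Real.sqrt d : ℝ) : EReal) →
          renyiDiv q μ π ≤ renyiDiv q μ₀ π →
          (∀ δ : ℝ, 0 < δ → δ < 1 / c₀ →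
            π {x | C₁ * d + C₂ * Real.sqrt d * Real.log (1 / δ)
                + C₃ * Real.log (1 / δ) ^ 2 < f x} ≤ ENNReal.ofReal δ) →
          ∀ δ : ℝ, 0 < δ → δ < 1 / c₀' →
            μ {x | C' * max C₁ (max C₂ C₃) * d
                + C' * C₂ * Real.sqrt d * Real.log (1 / δ)
                + C' * C₃ * Real.log (1 / δ) ^ 2 < f x} ≤ ENNReal.ofReal δ := by
  intro K c₀ hK hc₀
  refine ⟨8 + K + 2 * K ^ 2, by positivity, max c₀ 1, by positivity, ?_⟩
  intro Ω _ π μ₀ μ _ _ _ q hq d C₁ C₂ C₃ hd hC₁ hC₂ hC₃ f hf hμ₀π hμμ₀ hπ δ hδ hδc₀'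
  have hδc₀ : δ < 1 / c₀ := hδc₀'.trans_le (one_div_le_one_div_of_le hc₀ (le_max_left _ _))
  have hδ₁ : δ < 1 := hδc₀'.trans_le (div_le_one_of_le₀ (le_max_right _ _) (by positivity))
  set L := Real.log (1 / δ)
  have hδL : δ = Real.exp (-L) := by simp only [L, one_div, Real.log_inv, neg_neg, Real.exp_log hδ]
  have hL : 0 ≤ L := Real.log_nonneg (one_le_one_div hδ hδ₁.le)
  -- `e^{-t}` is the `π`-confidence whose `(q-1)/q`-th power absorbs the factor `e^{(q-1)/q · K√d}`.
  set t := q.conjExponent * L + K * √d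
  have hLt : L ≤ t := le_add_of_le_of_nonneg
    (le_mul_of_one_le_left hL (Real.HolderConjugate.conjExponent (by linarith)).symm.lt.le)
    (by positivity)
  have ht : t ≤ 2 * L + K * √d :=
    add_le_add_left (mul_le_mul_of_nonneg_right (Real.conjExponent_le_two hq) hL) _
  have hlevel : subWeibullLevel C₁ C₂ C₃ d t ≤ subWeibullLevel ((8 + K + 2 * K ^ 2) *
      max C₁ (max C₂ C₃)) ((8 + K + 2 * K ^ 2) * C₂) ((8 + K + 2 * K ^ 2) * C₃) d L :=
    (subWeibullLevel_mono hC₂ hC₃ (hL.trans hLt) ht).trans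
      (subWeibullLevel_two_mul_add_le hC₁ hC₂ hC₃ (by linarith) hL hK.le)
  have hπt : π {x | subWeibullLevel C₁ C₂ C₃ d t < f x} ≤ ENNReal.ofReal (Real.exp (-t)) := by
    have hδt : Real.exp (-t) < 1 / c₀ :=
      (Real.exp_le_exp.mpr (neg_le_neg hLt)).trans_lt (hδL ▸ hδc₀)
    have := hπ (Real.exp (-t)) (Real.exp_pos _) hδt
    rwa [one_div, ← Real.exp_neg, neg_neg, Real.log_exp] at this
  calc μ {x | subWeibullLevel ((8 + K + 2 * K ^ 2) * max C₁ (max C₂ C₃))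
          ((8 + K + 2 * K ^ 2) * C₂) ((8 + K + 2 * K ^ 2) * C₃) d L < f x}
      ≤ μ {x | subWeibullLevel C₁ C₂ C₃ d t < f x} := measure_mono fun x hx ↦ hlevel.trans_lt hx
    _ ≤ ENNReal.ofReal δ := hδL ▸ measure_le_exp_neg_of_renyiDiv_le (by linarith)
        (hμμ₀.trans hμ₀π) (measurableSet_lt measurable_const hf) hπt
end
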